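/- For any r-partite hypergraph G = (A_1,...,A_r, E) with E nonempty, the optimal classical simultaneous guessing probability of the hypergraph game P^G equals ν(G)/|E|, where ν(G) is the maximum cardinality of a matching of G. -/
import Mathlib


open scoped Classical

/-- For an r-partite hypergraph G = (A_1,…,A_r, E), the optimal classical
simultaneous guessing probability of the game P^G equals ν(G)/|E|, where ν(G)
is the maximum matching size. -/
theorem classical_value_hypergraph_game
    (r : ℕ) (A : Fin r → Type) [∀ i, Fintype (A i)]
    (E : Finset (∀ i, A i)) (hE : E.Nonempty)
    (ν : ℕ)
    (hν : IsGreatest {n : ℕ | ∃ M : Finset (∀ i, A i), M ⊆ E ∧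
        (∀ e ∈ M, ∀ e' ∈ M, e ≠ e' → ∀ i, e i ≠ e' i) ∧ M.card = n} ν) :
    IsGreatest {p : ℝ | ∃ h : ∀ i, A i → (∀ j, A j),
        p = ((E.filter (fun e => ∀ i, h i (e i) = e)).card : ℝ) / (E.card : ℝ)}
      ((ν : ℝ) / (E.card : ℝ)) := by
  obtain ⟨M, hME, hMmatch, hMcard⟩ := hν.1
  have key : ∀ h : ∀ i, A i → (∀ j, A j),
      (E.filter (fun e => ∀ i, h i (e i) = e)).card ≤ ν := by
    intro h
    apply hν.2
    refine ⟨_, Finset.filter_subset _ _, ?_, rfl⟩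
    intro e he e' he' hne i hi
    rw [Finset.mem_filter] at he he'
    exact hne (by rw [← he.2 i, hi, he'.2 i])
  constructor
  · set h : ∀ i, A i → (∀ j, A j) := fun i a =>
      if hx : ∃ e ∈ M, e i = a then hx.choose else hE.choose with hh
    refine ⟨h, ?_⟩
    have hsub : M ⊆ E.filter (fun e => ∀ i, h i (e i) = e) := by
      intro e he
      refine Finset.mem_filter.mpr ⟨hME he, fun i => ?_⟩
      have hx : ∃ e' ∈ M, e' i = e i := ⟨e, he, rfl⟩
      simp only [hh, dif_pos hx]
      obtain ⟨he', hei⟩ := hx.choose_spec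
      by_contra hne
      exact hMmatch _ he' e he hne i hei
    have hcard : (E.filter (fun e => ∀ i, h i (e i) = e)).card = ν :=
      le_antisymm (key h) (hMcard ▸ Finset.card_le_card hsub)
    rw [hcard]
  · rintro p ⟨h, rfl⟩
    gcongr
    exact_mod_cast key h
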